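/- arXiv:math/0603437 — 5 statements merged into one kernel-verified Lean document; each statement's English description precedes it below -/
import Mathlib

section
/- Let A be a logmodular subalgebra of a unital C*-algebra M, and let Ψ : M → M be a positive contractive linear projection (Ψ ∘ Ψ = Ψ) whose range is a subalgebra of A containing the unit of M, and which is multiplicative on A (Ψ(ab) = Ψ(a)Ψ(b) for all a, b ∈ A). Then for every state ω of M: if ω(Ψ(a)) = ω(a) for all a ∈ A, then ω(Ψ(x)) = ω(x) for all x ∈ M. -/
/-!
Hoffman's argument. For `a` invertible in `A`, the cross terms of `a = Ψ a + (a - Ψ a)` vanish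
under `ω`, so `ω (a⋆ a) ≥ ω ((Ψ a)⋆ Ψ a)`. The Cauchy–Schwarz inequality for the positive
functional `ω ∘ Ψ`, applied to `(a⁻¹)⋆` and `Ψ a`, whose `ω ∘ Ψ`-inner product is
`ω (Ψ (a⁻¹ a)) = 1`, then gives `1 ≤ ω (a⋆ a) · ω (Ψ (a⋆ a)⁻¹)`.
By logmodularity and continuity, `1 ≤ ω u · ω (Ψ u⁻¹)` for every positive invertible `u`.
For self-adjoint `w`, the function `t ↦ ω (1 + t w) · ω (Ψ (1 + t w)⁻¹)` therefore attains its
minimum `1` at `t = 0`, and its derivative there, `ω w - ω (Ψ w)`, must vanish.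
-/

open scoped ComplexOrder

noncomputable section

variable {M : Type*} [CStarAlgebra M] [PartialOrder M] [StarOrderedRing M]

/-- `A` is a logmodular subalgebra of the unital C*-algebra `M`: every positive invertible
element of `M` is a norm limit of elements of the form `star a * a`, where `a ∈ A` is
invertible in `M` with `a⁻¹ ∈ A`. -/
def IsLogmodular (A : Subalgebra ℂ M) : Prop :=
  ∀ b : M, 0 ≤ b → IsUnit b →
    b ∈ closure {x : M | ∃ a ∈ A, ∃ a' ∈ A, a * a' = 1 ∧ a' * a = 1 ∧ x = star a * a}

open Filter Topology

namespace PositiveLinearMap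

lemma norm_apply_star_mul_sq_le (f : M →ₚ[ℂ] ℂ) (a b : M) :
    ‖f (star a * b)‖ ^ 2 ≤ (f (star a * a)).re * (f (star b * b)).re := by
  have h := norm_inner_le_norm (𝕜 := ℂ) (f.toPreGNS a) (f.toPreGNS b)
  have ha := f.preGNS_norm_sq (f.toPreGNS a)
  have hb := f.preGNS_norm_sq (f.toPreGNS b)
  rw [preGNS_inner_def] at h
  simp only [ofPreGNS_toPreGNS] at h ha hb
  rw [← ha, ← hb, ← Complex.ofReal_pow, ← Complex.ofReal_pow, Complex.ofReal_re,
    Complex.ofReal_re, ← mul_pow]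
  exact pow_le_pow_left₀ (norm_nonneg _) h 2

lemma re_apply_star_mul_self_le_of_apply_star_mul_eq_zero (f : M →ₚ[ℂ] ℂ) {a b : M}
    (h : f (star a * b) = 0) : (f (star a * a)).re ≤ (f (star (a + b) * (a + b))).re := by
  have hpyth := norm_add_sq_eq_norm_sq_add_norm_sq_of_inner_eq_zero (f.toPreGNS a) (f.toPreGNS b) h
  have ha := congrArg Complex.re (f.preGNS_norm_sq (f.toPreGNS a))
  have hab := congrArg Complex.re (f.preGNS_norm_sq (f.toPreGNS (a + b)))
  simp only [ofPreGNS_toPreGNS, ← Complex.ofReal_pow, Complex.ofReal_re, map_add] at ha hab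
  rw [← ha, ← hab, sq, sq, hpyth]
  exact le_add_of_nonneg_right (mul_self_nonneg _)

end PositiveLinearMap

lemma IsSelfAdjoint.one_add_nonneg_of_norm_le_one {x : M} (hx : IsSelfAdjoint x) (h : ‖x‖ ≤ 1) :
    0 ≤ 1 + x := by
  have h1 : (0 : M) ≤ algebraMap ℝ M (1 - ‖x‖) := algebraMap_nonneg M (by linarith)
  rw [map_sub, map_one] at h1
  calc (0 : M) ≤ 1 - algebraMap ℝ M ‖x‖ := h1
    _ ≤ 1 + x := by rw [sub_eq_add_neg]; gcongr; exact hx.neg_algebraMap_norm_le_self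

lemma Ring.inverse_star_mul_self_of_mul_eq_one {R : Type*} [Ring R] [StarRing R] {a a' : R}
    (h : a * a' = 1) (h' : a' * a = 1) : Ring.inverse (star a * a) = a' * star a' :=
  Ring.inverse_unit ⟨star a * a, a' * star a',
    by rw [mul_assoc, ← mul_assoc a, h, one_mul, ← star_mul, h', star_one],
    by rw [mul_assoc, ← mul_assoc (star a'), ← star_mul, h, star_one, one_mul, h']⟩

section Derivative

variable {R : Type*} [NormedRing R] [NormedAlgebra ℝ R]

lemma hasDerivAt_one_add_smul (w : R) : HasDerivAt (fun t : ℝ ↦ 1 + t • w) w 0 := by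
  simpa using ((hasDerivAt_id (0 : ℝ)).smul_const w).const_add 1

lemma hasDerivAt_inverse_one_add_smul [HasSummableGeomSeries R] (w : R) :
    HasDerivAt (fun t : ℝ ↦ Ring.inverse (1 + t • w)) (-w) 0 := by
  simpa [Function.comp_def] using (hasFDerivAt_ringInverse (𝕜 := ℝ) (1 : Rˣ)).comp_hasDerivAt_of_eq
    (0 : ℝ) (hasDerivAt_one_add_smul w) (by simp)

lemma hasDerivAt_mul_inverse_one_add_smul [HasSummableGeomSeries R] (ℓ₁ ℓ₂ : R →L[ℝ] ℝ)
    (w : R) :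
    HasDerivAt (fun t : ℝ ↦ ℓ₁ (1 + t • w) * ℓ₂ (Ring.inverse (1 + t • w)))
      (ℓ₁ w * ℓ₂ 1 - ℓ₁ 1 * ℓ₂ w) 0 := by
  have h := (ℓ₁.hasFDerivAt.comp_hasDerivAt 0 (hasDerivAt_one_add_smul w)).mul
    (ℓ₂.hasFDerivAt.comp_hasDerivAt 0 (hasDerivAt_inverse_one_add_smul w))
  simp only [Function.comp_def, zero_smul, add_zero, Ring.inverse_one, map_neg] at h
  rw [sub_eq_add_neg, ← mul_neg]
  exact h

end Derivative

structure IsMultiplicativeProjection (A : Subalgebra ℂ M) (Ψ : M →ₚ[ℂ] M) : Prop where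
  map_map : ∀ x, Ψ (Ψ x) = Ψ x
  map_mem : ∀ x, Ψ x ∈ A
  map_one : Ψ 1 = 1
  map_mul : ∀ a ∈ A, ∀ b ∈ A, Ψ (a * b) = Ψ a * Ψ b

namespace IsMultiplicativeProjection

variable {A : Subalgebra ℂ M} {Ψ : M →ₚ[ℂ] M} {ω : M →ₚ[ℂ] ℂ}

lemma map_star_map (hΨ : IsMultiplicativeProjection A Ψ) (x : M) :
    Ψ (star (Ψ x)) = star (Ψ x) := by
  rw [map_star, hΨ.map_map]

lemma star_map_mem (hΨ : IsMultiplicativeProjection A Ψ) (x : M) : star (Ψ x) ∈ A := by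
  rw [← hΨ.map_star_map]; exact hΨ.map_mem _

lemma apply_star_map_mul_sub_map_eq_zero (hΨ : IsMultiplicativeProjection A Ψ)
    (hω : ∀ a ∈ A, ω (Ψ a) = ω a) {a : M} (ha : a ∈ A) :
    ω (star (Ψ a) * (a - Ψ a)) = 0 := by
  have hd : a - Ψ a ∈ A := A.sub_mem ha (hΨ.map_mem a)
  rw [← hω _ (A.mul_mem (hΨ.star_map_mem a) hd), hΨ.map_mul _ (hΨ.star_map_mem a) _ hd,
    map_sub, hΨ.map_map, sub_self, mul_zero, map_zero]

lemma re_apply_star_map_mul_map_le (hΨ : IsMultiplicativeProjection A Ψ)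
    (hω : ∀ a ∈ A, ω (Ψ a) = ω a) {a : M} (ha : a ∈ A) :
    (ω (star (Ψ a) * Ψ a)).re ≤ (ω (star a * a)).re := by
  simpa using ω.re_apply_star_mul_self_le_of_apply_star_mul_eq_zero
    (hΨ.apply_star_map_mul_sub_map_eq_zero hω ha)

lemma one_le_re_apply_star_mul_self_mul (hΨ : IsMultiplicativeProjection A Ψ)
    (hω : ∀ a ∈ A, ω (Ψ a) = ω a) (hω1 : ω 1 = 1) {a a' : M} (ha : a ∈ A) (ha' : a' ∈ A)
    (h : a' * a = 1) :
    1 ≤ (ω (star a * a)).re * (ω (Ψ (a' * star a'))).re := by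
  set φ := ω.comp Ψ
  have hcs := φ.norm_apply_star_mul_sq_le (star a') (Ψ a)
  have h1 : φ (star (star a') * Ψ a) = 1 := by
    simp [φ, hΨ.map_mul _ ha' _ (hΨ.map_mem a), hΨ.map_map, ← hΨ.map_mul _ ha' _ ha, h,
      hΨ.map_one, hω1]
  have h2 : φ (star (Ψ a) * Ψ a) = ω (star (Ψ a) * Ψ a) := by
    show ω (Ψ _) = _
    rw [hΨ.map_mul _ (hΨ.star_map_mem a) _ (hΨ.map_mem a), hΨ.map_star_map, hΨ.map_map]
  rw [h1, h2, star_star, norm_one, one_pow] at hcs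
  have hnn : 0 ≤ (φ (a' * star a')).re := (φ.map_nonneg (mul_star_self_nonneg a')).1
  calc 1 ≤ (φ (a' * star a')).re * (ω (star (Ψ a) * Ψ a)).re := hcs
    _ ≤ (φ (a' * star a')).re * (ω (star a * a)).re :=
      mul_le_mul_of_nonneg_left (hΨ.re_apply_star_map_mul_map_le hω ha) hnn
    _ = _ := mul_comm _ _

lemma one_le_re_apply_mul_re_apply_map_inverse (hΨ : IsMultiplicativeProjection A Ψ)
    (hω : ∀ a ∈ A, ω (Ψ a) = ω a) (hω1 : ω 1 = 1) (hA : IsLogmodular A) {u : M} (hu : 0 ≤ u)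
    (hu' : IsUnit u) : 1 ≤ (ω u).re * (ω (Ψ (Ring.inverse u))).re := by
  have hcont : ContinuousAt (fun x ↦ (ω x).re * (ω (Ψ (Ring.inverse x))).re) u := by
    have hinv : ContinuousAt Ring.inverse u := hu'.unit_spec ▸ NormedRing.inverse_continuousAt _
    have hωre : Continuous fun x ↦ (ω x).re := Complex.continuous_re.comp (map_continuous ω)
    exact hωre.continuousAt.mul ((hωre.comp (map_continuous Ψ)).continuousAt.comp hinv)
  refine ContinuousWithinAt.closure_le (hA u hu hu') continuousWithinAt_const
    hcont.continuousWithinAt ?_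
  rintro _ ⟨a, ha, a', ha', h, h', rfl⟩
  rw [Ring.inverse_star_mul_self_of_mul_eq_one h h']
  exact hΨ.one_le_re_apply_star_mul_self_mul hω hω1 ha ha' h'

lemma apply_map_eq_of_isSelfAdjoint (hΨ : IsMultiplicativeProjection A Ψ)
    (hω : ∀ a ∈ A, ω (Ψ a) = ω a) (hω1 : ω 1 = 1) (hA : IsLogmodular A) {w : M}
    (hw : IsSelfAdjoint w) : ω (Ψ w) = ω w := by
  let ℓ₁ : M →L[ℝ] ℝ := Complex.reCLM.comp ⟨ω.toLinearMap.restrictScalars ℝ, map_continuous ω⟩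
  let ℓ₂ : M →L[ℝ] ℝ := ℓ₁.comp ⟨Ψ.toLinearMap.restrictScalars ℝ, map_continuous Ψ⟩
  have hℓ₁ (x : M) : ℓ₁ x = (ω x).re := rfl
  have hℓ₂ (x : M) : ℓ₂ x = (ω (Ψ x)).re := rfl
  have hmin : IsLocalMin (fun t : ℝ ↦ ℓ₁ (1 + t • w) * ℓ₂ (Ring.inverse (1 + t • w))) 0 := by
    have hsmall : ∀ᶠ t : ℝ in 𝓝 0, ‖t • w‖ < 1 := by
      have : Tendsto (fun t : ℝ ↦ t • w) (𝓝 0) (𝓝 0) := by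
        simpa using (tendsto_id (x := 𝓝 (0 : ℝ))).smul_const w
      exact (tendsto_norm_zero.comp this).eventually (gt_mem_nhds one_pos)
    filter_upwards [hsmall] with t ht
    have hunit : IsUnit (1 + t • w) := by
      have := (Units.oneSub (-(t • w)) (by rwa [norm_neg])).isUnit
      rwa [Units.val_oneSub, sub_neg_eq_add] at this
    have hpos : 0 ≤ 1 + t • w :=
      ((IsSelfAdjoint.all t).smul hw).one_add_nonneg_of_norm_le_one ht.le
    simpa [hℓ₁, hℓ₂, hΨ.map_one, hω1] using
      hΨ.one_le_re_apply_mul_re_apply_map_inverse hω hω1 hA hpos hunit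
  have hderiv := hmin.hasDerivAt_eq_zero (hasDerivAt_mul_inverse_one_add_smul ℓ₁ ℓ₂ w)
  simp only [hℓ₁, hℓ₂, hΨ.map_one, hω1, Complex.one_re, mul_one, one_mul, sub_eq_zero] at hderiv
  apply Complex.ext
  · exact hderiv.symm
  · rw [Complex.conj_eq_iff_im.mp (hw.map' ω), Complex.conj_eq_iff_im.mp ((hw.map' Ψ).map' ω)]

lemma apply_map_eq (hΨ : IsMultiplicativeProjection A Ψ) (hω : ∀ a ∈ A, ω (Ψ a) = ω a)
    (hω1 : ω 1 = 1) (hA : IsLogmodular A) (x : M) : ω (Ψ x) = ω x := by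
  rw [← realPart_add_I_smul_imaginaryPart x]
  simp only [map_add, map_smul, hΨ.apply_map_eq_of_isSelfAdjoint hω hω1 hA (realPart x).2,
    hΨ.apply_map_eq_of_isSelfAdjoint hω hω1 hA (imaginaryPart x).2]

end IsMultiplicativeProjection

theorem logmodular_unique_extension_general
    (A : Subalgebra ℂ M) (hA : IsLogmodular A)
    (Ψ : M →L[ℂ] M)
    (hΨpos : ∀ x : M, 0 ≤ x → 0 ≤ Ψ x)
    (hΨproj : ∀ x : M, Ψ (Ψ x) = Ψ x)
    (hΨrange_sub : Set.range Ψ ⊆ (A : Set M))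
    (hΨone : (1 : M) ∈ Set.range Ψ)
    (hΨmult : ∀ a ∈ A, ∀ b ∈ A, Ψ (a * b) = Ψ a * Ψ b)
    (ω : M →ₗ[ℂ] ℂ)
    (hωpos : ∀ x : M, 0 ≤ x → 0 ≤ ω x) (hωone : ω 1 = 1)
    (hωA : ∀ a ∈ A, ω (Ψ a) = ω a) :
    ∀ x : M, ω (Ψ x) = ω x := by
  obtain ⟨y, hy⟩ := hΨone
  have hΨ : IsMultiplicativeProjection A (.mk₀ Ψ.toLinearMap hΨpos) :=
    { map_map := hΨproj
      map_mem := fun x ↦ hΨrange_sub ⟨x, rfl⟩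
      map_one := hy ▸ hΨproj y
      map_mul := hΨmult }
  exact hΨ.apply_map_eq (ω := .mk₀ ω hωpos) hωA hωone hA

/-- If `A` is a logmodular subalgebra of a unital C*-algebra `M` and `Ψ : M → M` is a positive
contractive linear projection whose range is a subalgebra of `A` containing the unit, and which
is multiplicative on `A`, then every state `ω` of `M` with `ω ∘ Ψ = ω` on `A` satisfies
`ω ∘ Ψ = ω` on all of `M`. -/
theorem logmodular_unique_extension
    (A : Subalgebra ℂ M) (hA : IsLogmodular A)
    (Ψ : M →L[ℂ] M)
    (hΨpos : ∀ x : M, 0 ≤ x → 0 ≤ Ψ x)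
    (hΨcontr : ∀ x : M, ‖Ψ x‖ ≤ ‖x‖)
    (hΨproj : ∀ x : M, Ψ (Ψ x) = Ψ x)
    (hΨrange_sub : Set.range Ψ ⊆ (A : Set M))
    (hΨone : (1 : M) ∈ Set.range Ψ)
    (hΨrange_mul : ∀ x ∈ Set.range Ψ, ∀ y ∈ Set.range Ψ, x * y ∈ Set.range Ψ)
    (hΨmult : ∀ a ∈ A, ∀ b ∈ A, Ψ (a * b) = Ψ a * Ψ b)
    (ω : M →ₗ[ℂ] ℂ)
    (hωpos : ∀ x : M, 0 ≤ x → 0 ≤ ω x) (hωone : ω 1 = 1)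
    (hωA : ∀ a ∈ A, ω (Ψ a) = ω a) :
    ∀ x : M, ω (Ψ x) = ω x :=
  logmodular_unique_extension_general A hA Ψ hΨpos hΨproj hΨrange_sub hΨone hΨmult ω hωpos hωone hωA
end
end

section
/- With A, Ψ and ω as in the hypotheses (A a logmodular subalgebra of the unital C*-algebra M; Ψ : M → M a positive contractive linear projection whose range is a subalgebra of A containing the unit, multiplicative on A; ω a state of M with ω(Ψ(a)) = ω(a) for all a ∈ A): for every positive invertible element b of M one has 1 ≤ ω(Ψ(b)) · ω(b⁻¹). -/
/-! For `b = a* a` with `a, a⁻¹ ∈ A` one has `b⁻¹ = a⁻¹ (a⁻¹)*` and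
`ω (a⁻¹ Ψ a) = ω (Ψ (a⁻¹ a)) = 1`, so the Cauchy–Schwarz inequality for `ω` gives
`1 ≤ ω (b⁻¹) ω ((Ψ a)* Ψ a)`. Moreover `(Ψ a)* Ψ a ≤ Ψ (a* a)`, since the cross terms of
`Ψ ((Ψ a + (a - Ψ a))* (Ψ a + (a - Ψ a)))` vanish. Logmodularity and the continuity of
`b ↦ ω (Ψ b) ω (b⁻¹)` at invertible `b` extend the inequality to all positive invertible `b`. -/

open scoped ComplexOrder

noncomputable section

variable {M : Type*} [CStarAlgebra M] [PartialOrder M] [StarOrderedRing M]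

theorem Ring.inverse_star_mul_self {R : Type*} [MonoidWithZero R] [StarMul R] {a a' : R}
    (h : a * a' = 1) (h' : a' * a = 1) : Ring.inverse (star a * a) = a' * star a' := by
  let u : Rˣ := ⟨a, a', h, h'⟩
  simpa [u, mul_inv_rev] using Ring.inverse_unit (star u * u)

namespace PositiveLinearMap

theorem sq_norm_apply_star_mul_le {B : Type*} [NonUnitalCStarAlgebra B] [PartialOrder B]
    [StarOrderedRing B] (f : B →ₚ[ℂ] ℂ) (x y : B) :
    ((‖f (star x * y)‖ ^ 2 : ℝ) : ℂ) ≤ f (star x * x) * f (star y * y) := by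
  have hxy := pow_le_pow_left₀ (norm_nonneg _)
    (norm_inner_le_norm (𝕜 := ℂ) (f.toPreGNS x) (f.toPreGNS y)) 2
  have hx := f.preGNS_norm_sq (f.toPreGNS x)
  have hy := f.preGNS_norm_sq (f.toPreGNS y)
  rw [ofPreGNS_toPreGNS] at hx hy
  rw [preGNS_inner_def, mul_pow] at hxy
  rw [← hx, ← hy]
  exact_mod_cast hxy

variable {A : Subalgebra ℂ M} {Ψ : M →ₚ[ℂ] M}

theorem star_apply_mul_apply_le_apply_star_mul_self (hΨproj : ∀ x, Ψ (Ψ x) = Ψ x)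
    (hΨA : ∀ x, Ψ x ∈ A) (hΨmul : ∀ a ∈ A, ∀ b ∈ A, Ψ (a * b) = Ψ a * Ψ b)
    {a : M} (ha : a ∈ A) : star (Ψ a) * Ψ a ≤ Ψ (star a * a) := by
  set d := Ψ a
  set e := a - d
  have hd : star d ∈ A := map_star Ψ a ▸ hΨA (star a)
  have he : e ∈ A := sub_mem ha (hΨA a)
  have hΨe : Ψ e = 0 := by rw [map_sub, hΨproj, sub_self]
  have hdd : Ψ (star d * d) = star d * d := by rw [hΨmul _ hd _ (hΨA a), map_star, hΨproj]
  have hde : Ψ (star d * e) = 0 := by rw [hΨmul _ hd _ he, hΨe, mul_zero]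
  have hed : Ψ (star e * d) = 0 := by
    rw [← star_star d, ← star_mul, map_star, hde, star_zero]
  have hexpand : star a * a = star d * d + star d * e + star e * d + star e * e := by
    rw [show a = d + e from (add_sub_cancel d a).symm, star_add]
    noncomm_ring
  calc star d * d ≤ star d * d + Ψ (star e * e) :=
        le_add_of_nonneg_right (Ψ.map_nonneg (star_mul_self_nonneg e))
    _ = Ψ (star a * a) := by rw [hexpand, map_add, map_add, map_add, hdd, hde, hed, add_zero, add_zero]

theorem one_le_apply_apply_star_mul_self_mul_apply_inverse (ω : M →ₚ[ℂ] ℂ) (hω1 : ω 1 = 1)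
    (hΨ1 : Ψ 1 = 1) (hΨproj : ∀ x, Ψ (Ψ x) = Ψ x) (hΨA : ∀ x, Ψ x ∈ A)
    (hΨmul : ∀ a ∈ A, ∀ b ∈ A, Ψ (a * b) = Ψ a * Ψ b) (hωΨ : ∀ a ∈ A, ω (Ψ a) = ω a)
    {a a' : M} (ha : a ∈ A) (ha' : a' ∈ A) (h : a * a' = 1) (h' : a' * a = 1) :
    1 ≤ ω (Ψ (star a * a)) * ω (Ring.inverse (star a * a)) := by
  have hpair : ω (star (star a') * Ψ a) = 1 := by
    rw [star_star, ← hωΨ _ (mul_mem ha' (hΨA a)), hΨmul _ ha' _ (hΨA a), hΨproj,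
      ← hΨmul _ ha' _ ha, h', hΨ1, hω1]
  have hcs := ω.sq_norm_apply_star_mul_le (star a') (Ψ a)
  rw [hpair, star_star] at hcs
  rw [Ring.inverse_star_mul_self h h', mul_comm]
  calc (1 : ℂ) ≤ ω (a' * star a') * ω (star (Ψ a) * Ψ a) := by simpa using hcs
    _ ≤ ω (a' * star a') * ω (Ψ (star a * a)) :=
      mul_le_mul_of_nonneg_left
        (ω.monotone' (star_apply_mul_apply_le_apply_star_mul_self hΨproj hΨA hΨmul ha))
        (ω.map_nonneg (mul_star_self_nonneg a'))

end PositiveLinearMap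

theorem logmodular_det_inequality_general
    (A : Subalgebra ℂ M) (hA : IsLogmodular A)
    (Ψ : M →L[ℂ] M)
    (hΨpos : ∀ x : M, 0 ≤ x → 0 ≤ Ψ x)
    (hΨproj : ∀ x : M, Ψ (Ψ x) = Ψ x)
    (hΨrange_sub : Set.range Ψ ⊆ (A : Set M))
    (hΨone : (1 : M) ∈ Set.range Ψ)
    (hΨmult : ∀ a ∈ A, ∀ b ∈ A, Ψ (a * b) = Ψ a * Ψ b)
    (ω : M →ₗ[ℂ] ℂ)
    (hωpos : ∀ x : M, 0 ≤ x → 0 ≤ ω x) (hωone : ω 1 = 1)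
    (hωA : ∀ a ∈ A, ω (Ψ a) = ω a) :
    ∀ b : M, 0 ≤ b → IsUnit b → 1 ≤ ω (Ψ b) * ω (Ring.inverse b) := by
  intro b hb hbU
  let ωₚ := PositiveLinearMap.mk₀ ω hωpos
  have hΨ1 : Ψ 1 = 1 := by
    obtain ⟨y, hy⟩ := hΨone
    rw [← hy, hΨproj]
  have hinv : ContinuousAt Ring.inverse b :=
    hbU.unit_spec ▸ NormedRing.inverse_continuousAt hbU.unit
  have hcont : ContinuousAt (fun x => ω (Ψ x) * ω (Ring.inverse x)) b :=
    ((map_continuous ωₚ).comp Ψ.continuous).continuousAt.mul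
      ((map_continuous ωₚ).continuousAt.comp hinv)
  refine continuousWithinAt_const.closure_le (hA b hb hbU) hcont.continuousWithinAt ?_
  rintro _ ⟨a, ha, a', ha', h, h', rfl⟩
  exact PositiveLinearMap.one_le_apply_apply_star_mul_self_mul_apply_inverse
    (Ψ := PositiveLinearMap.mk₀ Ψ.toLinearMap hΨpos) ωₚ hωone hΨ1 hΨproj
    (fun x => hΨrange_sub ⟨x, rfl⟩) hΨmult hωA ha ha' h h'

/-- If `A` is a logmodular subalgebra of a unital C*-algebra `M`, `Ψ : M → M` is a positive
contractive linear projection whose range is a subalgebra of `A` containing the unit, and which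
is multiplicative on `A`, and `ω` is a state of `M` with `ω ∘ Ψ = ω` on `A`, then for every
positive invertible `b ∈ M` one has `1 ≤ ω(Ψ(b)) * ω(b⁻¹)`. -/
theorem logmodular_det_inequality
    (A : Subalgebra ℂ M) (hA : IsLogmodular A)
    (Ψ : M →L[ℂ] M)
    (hΨpos : ∀ x : M, 0 ≤ x → 0 ≤ Ψ x)
    (hΨcontr : ∀ x : M, ‖Ψ x‖ ≤ ‖x‖)
    (hΨproj : ∀ x : M, Ψ (Ψ x) = Ψ x)
    (hΨrange_sub : Set.range Ψ ⊆ (A : Set M))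
    (hΨone : (1 : M) ∈ Set.range Ψ)
    (hΨrange_mul : ∀ x ∈ Set.range Ψ, ∀ y ∈ Set.range Ψ, x * y ∈ Set.range Ψ)
    (hΨmult : ∀ a ∈ A, ∀ b ∈ A, Ψ (a * b) = Ψ a * Ψ b)
    (ω : M →ₗ[ℂ] ℂ)
    (hωpos : ∀ x : M, 0 ≤ x → 0 ≤ ω x) (hωone : ω 1 = 1)
    (hωA : ∀ a ∈ A, ω (Ψ a) = ω a) :
    ∀ b : M, 0 ≤ b → IsUnit b → 1 ≤ ω (Ψ b) * ω (Ring.inverse b) :=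
  logmodular_det_inequality_general A hA Ψ hΨpos hΨproj hΨrange_sub hΨone hΨmult ω hωpos hωone hωA
end
end

section
/- Let M be a unital C*-algebra, let φ and ψ be states of M, and let u ∈ M be self-adjoint. If φ(exp(tu)) · ψ(exp(−tu)) ≥ 1 for every real number t, then φ(u) = ψ(u). -/
/-! The real part of `t ↦ φ(exp(tu)) ψ(exp(-tu))` is at least `1`, its value at `t = 0`, so its
derivative `φ(u) - ψ(u)` at `0` has vanishing real part. Both `φ(u)` and `ψ(u)` are real because
positive functionals are hermitian; differentiating under them is legitimate because positive
functionals on a C⋆-algebra are automatically continuous. -/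

open scoped ComplexOrder

open NormedSpace in
theorem hasDerivAt_apply_exp_smul_zero {𝔸 E : Type*} [NormedRing 𝔸] [NormedAlgebra ℝ 𝔸]
    [CompleteSpace 𝔸] [NormedAddCommGroup E] [NormedSpace ℝ E] (L : 𝔸 →L[ℝ] E) (x : 𝔸) :
    HasDerivAt (fun t : ℝ => L (exp (t • x))) (L x) 0 := by
  simpa [Function.comp_def] using
    L.hasFDerivAt.comp_hasDerivAt 0 (hasDerivAt_exp_smul_const x (0 : ℝ))

theorem IsLocalMin.hasDerivAt_re_eq_zero {P : ℝ → ℂ} {p : ℂ} {t₀ : ℝ}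
    (hmin : IsLocalMin (fun t => (P t).re) t₀) (hP : HasDerivAt P p t₀) : p.re = 0 :=
  hmin.hasDerivAt_eq_zero <| by
    simpa [Function.comp_def] using Complex.reCLM.hasFDerivAt.comp_hasDerivAt t₀ hP

theorem PositiveLinearMap.im_apply_eq_zero {A : Type*} [AddCommGroup A] [Module ℂ A]
    [PartialOrder A] [StarAddMonoid A] [SelfAdjointDecompose A]
    (f : A →ₚ[ℂ] ℂ) {a : A} (ha : IsSelfAdjoint a) : (f a).im = 0 :=
  Complex.conj_eq_iff_im.mp (ha.map' f)

/-- Let `M` be a unital C*-algebra, `φ` and `ψ` states of `M`, and `u ∈ M` self-adjoint.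
If `φ(exp(t • u)) * ψ(exp(-t • u)) ≥ 1` for every real `t`, then `φ(u) = ψ(u)`. -/
theorem state_eq_of_exp_inequality
    {M : Type*} [CStarAlgebra M] [PartialOrder M] [StarOrderedRing M]
    (φ ψ : M →ₗ[ℂ] ℂ)
    (hφpos : ∀ x : M, 0 ≤ x → 0 ≤ φ x) (hφone : φ 1 = 1)
    (hψpos : ∀ x : M, 0 ≤ x → 0 ≤ ψ x) (hψone : ψ 1 = 1)
    (u : M) (hu : IsSelfAdjoint u)
    (h : ∀ t : ℝ, 1 ≤ φ (NormedSpace.exp (t • u)) * ψ (NormedSpace.exp ((-t) • u))) :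
    φ u = ψ u := by
  set f := PositiveLinearMap.mk₀ φ hφpos
  set g := PositiveLinearMap.mk₀ ψ hψpos
  have hf : HasDerivAt (fun t : ℝ => φ (NormedSpace.exp (t • u))) (φ u) 0 :=
    hasDerivAt_apply_exp_smul_zero ⟨φ.restrictScalars ℝ, map_continuous f⟩ u
  have hg : HasDerivAt (fun t : ℝ => ψ (NormedSpace.exp ((-t) • u))) (-ψ u) 0 := by
    have : HasDerivAt (fun t : ℝ => ψ (NormedSpace.exp (t • -u))) (ψ (-u)) 0 :=
      hasDerivAt_apply_exp_smul_zero ⟨ψ.restrictScalars ℝ, map_continuous g⟩ (-u)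
    simpa only [neg_smul, smul_neg, map_neg] using this
  have hmin : IsLocalMin
      (fun t : ℝ => (φ (NormedSpace.exp (t • u)) * ψ (NormedSpace.exp ((-t) • u))).re) 0 :=
    .of_forall fun t => by simpa [hφone, hψone] using (Complex.le_def.mp (h t)).1
  have hre := hmin.hasDerivAt_re_eq_zero (hf.mul hg)
  apply Complex.ext
  · simpa [hφone, hψone, ← sub_eq_add_neg, sub_eq_zero] using hre
  · exact (f.im_apply_eq_zero hu).trans (g.im_apply_eq_zero hu).symm
end

section
/- Let A be a tracial subalgebra of M. If A has the Φ-state property then A has the unique state extension property. Conversely, if A is antisymmetric (that is, D = ℂ1) and A has the unique state extension property, then A has the Φ-state property. -/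
/-!
Since `Φ` maps `M` onto `D` and `τ ∘ Φ = τ`, any functional `ω` agreeing with `τ` on `D`
satisfies `ω ∘ Φ = τ`. A state agreeing with `τ` on `A` agrees with it on `D ⊆ A`, and
the `Φ`-state property then forces `ω = ω ∘ Φ = τ`. If `D = ℂ1`, every state agrees with `τ`
on `D`, so `ω ∘ Φ = ω` on `A` means `ω = τ` on `A`, hence `ω = τ` and `ω ∘ Φ = τ ∘ Φ = ω`.
-/

open scoped ComplexOrder

noncomputable section

variable {H : Type*} [NormedAddCommGroup H] [InnerProductSpace ℂ H] [CompleteSpace H]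
variable {M : Type*} [CStarAlgebra M] [PartialOrder M] [StarOrderedRing M]

/-- The image of an element of `M` in `B(H)` endowed with the weak operator topology. -/
def wot (ι : M →⋆ₐ[ℂ] (H →L[ℂ] H)) (x : M) : H →WOT[ℂ] H :=
  ContinuousLinearMapWOT.ofCLM (ι x)

/-- A functional on `M` is normal if its restriction to the closed unit ball of `M` is
continuous for the weak operator topology. -/
def IsNormalFunctional (ι : M →⋆ₐ[ℂ] (H →L[ℂ] H)) (ω : M → ℂ) : Prop :=
  @Continuous {x : M // ‖x‖ ≤ 1} ℂ
    (TopologicalSpace.induced (fun x => wot ι (x : M)) inferInstance) _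
    (fun x => ω (x : M))

/-- A map `M → M` is normal if its restriction to the closed unit ball of `M` is continuous
from the weak operator topology to the weak operator topology. -/
def IsNormalMap (ι : M →⋆ₐ[ℂ] (H →L[ℂ] H)) (Φ : M → M) : Prop :=
  @Continuous {x : M // ‖x‖ ≤ 1} (H →WOT[ℂ] H)
    (TopologicalSpace.induced (fun x => wot ι (x : M)) inferInstance) _
    (fun x => wot ι (Φ (x : M)))

/-- A tracial subalgebra `A` of the von Neumann algebra `M` (faithfully realized via the
isometric unital `*`-embedding `ι` as a WOT-closed `*`-subalgebra of `B(H)`), together with a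
faithful normal tracial state `τ` and the `τ`-preserving conditional expectation `Φ` of `M`
onto the diagonal `D = A ∩ A*`, which is multiplicative on `A`. -/
structure TracialSubalgebra (ι : M →⋆ₐ[ℂ] (H →L[ℂ] H)) where
  ι_isometry : Isometry ι
  M_wotClosed : IsClosed (Set.range fun x : M => wot ι x)
  τ : M →L[ℂ] ℂ
  τ_pos : ∀ x : M, 0 ≤ x → 0 ≤ τ x
  τ_one : τ 1 = 1
  τ_trace : ∀ x y : M, τ (x * y) = τ (y * x)
  τ_faithful : ∀ x : M, τ (star x * x) = 0 → x = 0
  τ_normal : IsNormalFunctional ι τ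
  A : Subalgebra ℂ M
  A_wotClosed : IsClosed ((fun x => wot ι x) '' (A : Set M))
  Φ : M →L[ℂ] M
  Φ_one : Φ 1 = 1
  Φ_pos : ∀ x : M, 0 ≤ x → 0 ≤ Φ x
  Φ_idem : ∀ x : M, Φ (Φ x) = Φ x
  Φ_range : Set.range Φ = {x : M | x ∈ A ∧ star x ∈ A}
  Φ_bimod : ∀ d x d' : M, d ∈ A → star d ∈ A → d' ∈ A → star d' ∈ A →
      Φ (d * x * d') = d * Φ x * d'
  Φ_normal : IsNormalMap ι Φ
  τ_comp_Φ : ∀ x : M, τ (Φ x) = τ x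
  Φ_mult : ∀ a b : M, a ∈ A → b ∈ A → Φ (a * b) = Φ a * Φ b

namespace TracialSubalgebra

variable {ι : M →⋆ₐ[ℂ] (H →L[ℂ] H)} (T : TracialSubalgebra ι)

/-- The ideal `A₀ = A ∩ ker Φ`, as a set. -/
def Azero : Set M := {a : M | a ∈ T.A ∧ T.Φ a = 0}

/-- The diagonal `D = A ∩ A*`, as a set. -/
def diag : Set M := {x : M | x ∈ T.A ∧ star x ∈ T.A}

/-- The subspace `A + A*`, as a set. -/
def selfAdjSum : Set M := {x : M | ∃ a ∈ T.A, ∃ b ∈ T.A, x = a + star b}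

/-- `A` is maximal subdiagonal if `A + A*` is dense in `M` for the weak operator topology. -/
def MaxSubdiagonal : Prop :=
  ∀ x : M, wot ι x ∈ closure ((fun y => wot ι y) '' T.selfAdjSum)

end TracialSubalgebra

/-- A state of `M`: a positive linear functional taking the value `1` at the unit. -/
def IsStateLin (ω : M →ₗ[ℂ] ℂ) : Prop :=
  (∀ x : M, 0 ≤ x → 0 ≤ ω x) ∧ ω 1 = 1

theorem LinearMap.map_algebraMap_eq_of_map_one {R : Type*} [Ring R] [Algebra ℂ R]
    {f g : R →ₗ[ℂ] ℂ} (h : f 1 = g 1) (c : ℂ) : f (algebraMap ℂ R c) = g (algebraMap ℂ R c) := by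
  simp only [Algebra.algebraMap_eq_smul_one, map_smul, h]

namespace TracialSubalgebra

variable {ι : M →⋆ₐ[ℂ] (H →L[ℂ] H)} (T : TracialSubalgebra ι)

theorem map_Φ_eq_τ_of_eqOn_diag {ω : M →ₗ[ℂ] ℂ} (h : ∀ d ∈ T.diag, ω d = T.τ d) (x : M) :
    ω (T.Φ x) = T.τ x := by
  have hΦx : T.Φ x ∈ T.diag := by
    rw [diag, ← T.Φ_range]
    exact ⟨x, rfl⟩
  rw [h _ hΦx, T.τ_comp_Φ]

def HasPhiStateProperty : Prop :=
  ∀ ω : M →ₗ[ℂ] ℂ, IsStateLin ω → (∀ a ∈ T.A, ω (T.Φ a) = ω a) → ∀ x : M, ω (T.Φ x) = ω x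

def HasUniqueStateExtension : Prop :=
  ∀ ω : M →ₗ[ℂ] ℂ, IsStateLin ω → (∀ a ∈ T.A, ω a = T.τ a) → ∀ x : M, ω x = T.τ x

variable {T}

theorem HasPhiStateProperty.hasUniqueStateExtension (hΦ : T.HasPhiStateProperty) :
    T.HasUniqueStateExtension := by
  intro ω hω hA x
  have hdiag : ∀ y, ω (T.Φ y) = T.τ y :=
    T.map_Φ_eq_τ_of_eqOn_diag fun d hd => hA d hd.1
  rw [← hΦ ω hω (fun a ha => by rw [hdiag, hA a ha]) x, hdiag]

theorem HasUniqueStateExtension.hasPhiStateProperty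
    (hD : T.diag = Set.range (algebraMap ℂ M)) (hU : T.HasUniqueStateExtension) :
    T.HasPhiStateProperty := by
  intro ω hω hΦA
  have hdiag : ∀ y, ω (T.Φ y) = T.τ y := by
    refine T.map_Φ_eq_τ_of_eqOn_diag ?_
    rw [hD]
    rintro _ ⟨c, rfl⟩
    exact LinearMap.map_algebraMap_eq_of_map_one (g := T.τ.toLinearMap)
      (hω.2.trans T.τ_one.symm) c
  have hτ : ∀ y, ω y = T.τ y := hU ω hω fun a ha => by rw [← hΦA a ha, hdiag]
  intro x
  rw [hdiag, hτ]

variable (T)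

/-- If a tracial subalgebra `A` of `M` has the `Φ`-state property then it has the unique state
extension property (`τ` is the only state of `M` extending `τ|_A`).  Conversely, if `A` is
antisymmetric (`D = ℂ1`) and has the unique state extension property, then `A` has the
`Φ`-state property. -/
theorem phiState_and_uniqueStateExtension :
    ((∀ ω : M →ₗ[ℂ] ℂ, IsStateLin ω → (∀ a ∈ T.A, ω (T.Φ a) = ω a) →
        ∀ x : M, ω (T.Φ x) = ω x) →
      ∀ ω : M →ₗ[ℂ] ℂ, IsStateLin ω → (∀ a ∈ T.A, ω a = T.τ a) → ∀ x : M, ω x = T.τ x)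
    ∧ (T.diag = Set.range (algebraMap ℂ M) →
      (∀ ω : M →ₗ[ℂ] ℂ, IsStateLin ω → (∀ a ∈ T.A, ω a = T.τ a) → ∀ x : M, ω x = T.τ x) →
      ∀ ω : M →ₗ[ℂ] ℂ, IsStateLin ω → (∀ a ∈ T.A, ω (T.Φ a) = ω a) →
        ∀ x : M, ω (T.Φ x) = ω x) :=
  ⟨HasPhiStateProperty.hasUniqueStateExtension,
    fun hD hU => HasUniqueStateExtension.hasPhiStateProperty hD hU⟩

end TracialSubalgebra
end
end

section
/- Let A be a tracial subalgebra of M and let ρ be a positive linear functional on M such that ρ − τ is a positive functional. Let π : M → B(K) be a unital *-homomorphism into the bounded operators on a complex Hilbert space K with ρ(x) = ⟨π(x)Ω, Ω⟩ for all x ∈ M, for some Ω ∈ K, and let Ω₀ be the orthogonal projection of Ω onto the closure of the subspace {π(f)Ω : f ∈ A₀}. Then for every positive d ∈ D one has ‖π(d^{1/2})(Ω − Ω₀)‖² ≥ τ(d), where d^{1/2} is the positive square root of d given by the continuous functional calculus. In particular (taking d = 1), Ω ≠ Ω₀. -/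
/-! For `f ∈ A₀` and `d ∈ D`, `τ(d f) = τ(Φ(d) Φ(f)) = 0` and likewise `τ(f* d) = 0`, so the
cross terms of `(1 - f)* d (1 - f)` vanish under `τ` and
`τ(d) ≤ τ((1 - f)* d (1 - f)) ≤ ρ((1 - f)* d (1 - f)) = ‖π(d^{1/2})(Ω - π(f)Ω)‖²`.
The bound is a closed condition on the vector `π(f)Ω`, so it persists at `Ω₀`; for `d = 1` it
reads `1 ≤ ‖Ω - Ω₀‖²`. -/

open scoped ComplexOrder

noncomputable section

variable {H : Type*} [NormedAddCommGroup H] [InnerProductSpace ℂ H] [CompleteSpace H]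
variable {M : Type*} [CStarAlgebra M] [PartialOrder M] [StarOrderedRing M]

lemma StarAlgHom.inner_apply_star_mul_self_apply {A K : Type*} [Semiring A] [Algebra ℂ A]
    [StarRing A] [NormedAddCommGroup K] [InnerProductSpace ℂ K] [CompleteSpace K]
    (π : A →⋆ₐ[ℂ] (K →L[ℂ] K)) (Ω : K) (y : A) :
    inner ℂ Ω (π (star y * y) Ω) = (‖π y Ω‖ : ℂ) ^ 2 := by
  rw [map_mul, map_star, mul_apply_eq_comp, ContinuousLinearMap.star_eq_adjoint,
    ContinuousLinearMap.adjoint_inner_right, inner_self_eq_norm_sq_to_K]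
  rfl

namespace TracialSubalgebra

variable {ι : M →⋆ₐ[ℂ] (H →L[ℂ] H)} (T : TracialSubalgebra ι)

lemma τ_star (x : M) : T.τ (star x) = star (T.τ x) :=
  map_star (PositiveLinearMap.mk₀ (T.τ : M →ₗ[ℂ] ℂ) T.τ_pos) x

lemma τ_star_one_sub_mul_mul_one_sub {d f : M} (hdA : d ∈ T.A) (hdsA : star d ∈ T.A)
    (hf : f ∈ T.Azero) :
    T.τ (star (1 - f) * d * (1 - f)) = T.τ d + T.τ (star f * d * f) := by
  have haf : ∀ a ∈ T.A, T.τ (a * f) = 0 := fun a ha ↦ by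
    rw [← T.τ_comp_Φ, T.Φ_mult a f ha hf.1, hf.2, mul_zero, map_zero]
  have hfd : T.τ (star f * d) = 0 := by
    rw [← star_star d, ← star_mul, τ_star, haf _ hdsA, star_zero]
  have hexpand : star (1 - f) * d * (1 - f) = d - star f * d - d * f + star f * d * f := by
    rw [star_sub, star_one]
    noncomm_ring
  rw [hexpand, map_add, map_sub, map_sub, hfd, haf d hdA]
  ring

lemma τ_le_τ_star_one_sub_mul_mul_one_sub {d f : M} (hdA : d ∈ T.A) (hdsA : star d ∈ T.A)
    (hd : 0 ≤ d) (hf : f ∈ T.Azero) :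
    T.τ d ≤ T.τ (star (1 - f) * d * (1 - f)) := by
  rw [T.τ_star_one_sub_mul_mul_one_sub hdA hdsA hf]
  exact le_add_of_nonneg_right (T.τ_pos _ (star_left_conjugate_nonneg hd f))

theorem τ_le_norm_sq_sqrt_apply_sub (ρ : M →ₗ[ℂ] ℂ) (hρτ : ∀ x : M, 0 ≤ x → 0 ≤ ρ x - T.τ x)
    {K : Type*} [NormedAddCommGroup K] [InnerProductSpace ℂ K] [CompleteSpace K]
    (π : M →⋆ₐ[ℂ] (K →L[ℂ] K)) (Ω : K) (hGNS : ∀ x : M, ρ x = inner ℂ Ω (π x Ω))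
    {d : M} (hdA : d ∈ T.A) (hdsA : star d ∈ T.A) (hd : 0 ≤ d)
    {v : K} (hv : v ∈ closure {v : K | ∃ f ∈ T.Azero, v = π f Ω}) :
    T.τ d ≤ (‖π (CFC.sqrt d) (Ω - v)‖ : ℂ) ^ 2 := by
  have hclosed : IsClosed {v : K | T.τ d ≤ (‖π (CFC.sqrt d) (Ω - v)‖ : ℂ) ^ 2} :=
    isClosed_le continuous_const (by fun_prop)
  refine closure_minimal ?_ hclosed hv
  rintro _ ⟨f, hf, rfl⟩
  have hconj :
      star (1 - f) * d * (1 - f) = star (CFC.sqrt d * (1 - f)) * (CFC.sqrt d * (1 - f)) := by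
    nth_rw 1 [← CFC.sqrt_mul_sqrt_self d hd]
    rw [star_mul, (CFC.sqrt_nonneg d).isSelfAdjoint.star_eq]
    noncomm_ring
  have hπ : π (1 - f) Ω = Ω - π f Ω := by simp
  calc T.τ d ≤ T.τ (star (1 - f) * d * (1 - f)) :=
        T.τ_le_τ_star_one_sub_mul_mul_one_sub hdA hdsA hd hf
    _ ≤ ρ (star (1 - f) * d * (1 - f)) := sub_nonneg.mp (hρτ _ (star_left_conjugate_nonneg hd _))
    _ = (‖π (CFC.sqrt d) (Ω - π f Ω)‖ : ℂ) ^ 2 := by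
      rw [hGNS, hconj, StarAlgHom.inner_apply_star_mul_self_apply, map_mul,
        mul_apply_eq_comp, hπ]

theorem gns_projection_dominates_trace
    (ρ : M →ₗ[ℂ] ℂ)
    (hρτ : ∀ x : M, 0 ≤ x → 0 ≤ ρ x - T.τ x)
    {K : Type*} [NormedAddCommGroup K] [InnerProductSpace ℂ K] [CompleteSpace K]
    (π : M →⋆ₐ[ℂ] (K →L[ℂ] K)) (Ω : K)
    (hGNS : ∀ x : M, ρ x = inner ℂ Ω (π x Ω))
    (Ω₀ : K)
    (hmem : Ω₀ ∈ closure {v : K | ∃ f ∈ T.Azero, v = π f Ω}) :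
    (∀ d : M, d ∈ T.A → star d ∈ T.A → 0 ≤ d →
        T.τ d ≤ ((‖π (CFC.sqrt d) (Ω - Ω₀)‖ : ℂ) ^ 2)) ∧ Ω ≠ Ω₀ := by
  have hτ : ∀ d : M, d ∈ T.A → star d ∈ T.A → 0 ≤ d →
      T.τ d ≤ (‖π (CFC.sqrt d) (Ω - Ω₀)‖ : ℂ) ^ 2 :=
    fun d hdA hdsA hd ↦ T.τ_le_norm_sq_sqrt_apply_sub ρ hρτ π Ω hGNS hdA hdsA hd hmem
  refine ⟨hτ, fun h ↦ (zero_lt_one (α := ℂ)).not_ge ?_⟩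
  simpa [h, T.τ_one] using hτ 1 T.A.one_mem (by simp) zero_le_one

end TracialSubalgebra
end
end
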